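/- arXiv:1010.6139 — 2 statements merged into one kernel-verified Lean document; each statement's English description precedes it below -/
import Mathlib

section
/- If G is a connected graph with m edges and src(G) ∈ {m−1, m−2}, then the girth of G satisfies 3 ≤ g(G) ≤ 5 (in particular G contains a cycle, and no cycle of G is a shortest cycle of length exceeding 5). -/
open SimpleGraph

/-- An edge-coloring `c` is a strong rainbow coloring of `G` if every pair of vertices is
joined by a geodesic (shortest path) whose edges receive pairwise distinct colors. -/
def SimpleGraph.IsStrongRainbowColoring {V : Type*} (G : SimpleGraph V) (c : Sym2 V → ℕ) : Prop :=
  ∀ u v : V, ∃ p : G.Walk u v, p.IsPath ∧ p.length = G.dist u v ∧ (p.edges.map c).Nodup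

/-- The strong rainbow connection number: the least number of colors in a strong rainbow
coloring of `G`. -/
noncomputable def SimpleGraph.src {V : Type*} (G : SimpleGraph V) : ℕ :=
  sInf {n : ℕ | ∃ c : Sym2 V → Fin n, ∀ u v : V, ∃ p : G.Walk u v,
    p.IsPath ∧ p.length = G.dist u v ∧ (p.edges.map c).Nodup}

/-!
Any two edges of a tree lie on a common path, which is the unique geodesic between its ends,
so a strong rainbow coloring of a tree is injective and `src G = m`; hence `G` has a cycle.
If the girth `L` were at least `6`, take a shortest cycle and `k = ⌊L/2⌋`. A shortest cycle is
isometric, so the four distances between the ends of its edge at position `t` and those of its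
edge at position `t + k` lie in `{k - 1, k}`, whereas two edges `a - a' ⋯ b' - b` of a geodesic
have `d(a, b) = d(a', b') + 2`. So no geodesic contains both edges, and giving the edges at
positions `t + k` the colors of those at positions `t` (`t = 0, 1, 2`), all other edges distinct
colors, is a strong rainbow coloring with `m - 3` colors.
-/

section Recoloring

variable {α ι : Type*} {e f : ι → α}

lemma Function.injOn_extend_id (hinj : Function.Injective (Sum.elim e f)) {S : Set α}
    (hS : ∀ i, e i ∈ S → f i ∉ S) : Set.InjOn (Function.extend f e id) S := by
  have hFf : ∀ i, Function.extend f e id (f i) = e i :=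
    (hinj.comp Sum.inr_injective).extend_apply e id
  intro x hx y hy hxy
  by_cases hxf : ∃ i, f i = x <;> by_cases hyf : ∃ j, f j = y
  · obtain ⟨i, rfl⟩ := hxf
    obtain ⟨j, rfl⟩ := hyf
    rw [hFf, hFf] at hxy
    rw [hinj.comp Sum.inl_injective hxy]
  · obtain ⟨i, rfl⟩ := hxf
    rw [hFf, Function.extend_apply' _ _ _ hyf] at hxy
    exact absurd hx (hS i (hxy ▸ hy))
  · obtain ⟨j, rfl⟩ := hyf
    rw [hFf, Function.extend_apply' _ _ _ hxf] at hxy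
    exact absurd hy (hS j (hxy ▸ hx))
  · simpa [Function.extend_apply' _ _ _ hxf, Function.extend_apply' _ _ _ hyf] using hxy

lemma Finset.card_image_extend_id_add_card_le [DecidableEq α] [Fintype ι] {s : Finset α}
    (hinj : Function.Injective (Sum.elim e f)) (hs : ∀ x, Sum.elim e f x ∈ s) :
    (s.image (Function.extend f e id)).card + Fintype.card ι ≤ s.card := by
  have hf : f.Injective := hinj.comp Sum.inr_injective
  have hsub : Finset.univ.image f ⊆ s := by
    simpa [Finset.subset_iff] using fun i ↦ hs (Sum.inr i)
  have himage : s.image (Function.extend f e id) ⊆ s \ Finset.univ.image f := by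
    intro y hy
    obtain ⟨x, hx, rfl⟩ := Finset.mem_image.mp hy
    by_cases hxf : ∃ i, f i = x
    · obtain ⟨i, rfl⟩ := hxf
      have hef : ∀ j, f j ≠ e i := fun j h ↦ Sum.inl_ne_inr (hinj h.symm)
      simpa [hf.extend_apply, hef] using hs (Sum.inl i)
    · simpa [Function.extend_apply' _ _ _ hxf, hx] using hxf
  have h₁ := Finset.card_le_card himage
  have h₂ := Finset.card_le_card hsub
  rw [Finset.card_sdiff_of_subset hsub] at h₁
  rw [Finset.card_image_of_injective _ hf, Finset.card_univ] at h₁ h₂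
  omega

end Recoloring

namespace SimpleGraph

variable {V : Type*} {G : SimpleGraph V}

namespace Walk

lemma IsCycle.append_comm {u v : V} {p : G.Walk u v} {q : G.Walk v u}
    (h : (p.append q).IsCycle) : (q.append p).IsCycle := by
  obtain ⟨htrail, hnil, hsupp⟩ := (isCycle_def _).mp h
  refine (isCycle_def _).mpr ⟨?_, fun hqp ↦ hnil ?_, ?_⟩
  · rw [isTrail_def, edges_append] at htrail ⊢
    exact List.nodup_append_comm.mp htrail
  · exact eq_nil_iff_nil.mpr (length_eq_zero_iff.mp
      (by simpa [Nat.add_comm] using congrArg length hqp))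
  · rw [tail_support_append] at hsupp ⊢
    exact List.nodup_append_comm.mp hsupp

lemma IsTrail.injOn_getVert_edge {u v : V} {p : G.Walk u v} (hp : p.IsTrail) :
    Set.InjOn (fun i ↦ s(p.getVert i, p.getVert (i + 1))) {i | i < p.length} := by
  intro i hi j hj hij
  have hi' : i < p.edges.length := by simpa using hi
  have hj' : j < p.edges.length := by simpa using hj
  simp only [← getElem_edges hi', ← getElem_edges hj'] at hij
  exact (hp.edges_nodup.getElem_inj_iff).mp hij

lemma dist_getVert_getVert_of_length_eq_dist {u v : V} {p : G.Walk u v}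
    (hp : p.length = G.dist u v) {i j : ℕ} (hij : i ≤ j) (hj : j ≤ p.length) :
    G.dist (p.getVert i) (p.getVert j) = j - i := by
  have hsub : ((p.drop i).take (j - i)).IsSubwalk p :=
    ((p.drop i).isSubwalk_take _).trans (p.isSubwalk_drop i)
  have h := length_eq_dist_of_subwalk hp hsub
  rw [take_length, drop_length, drop_getVert, Nat.add_sub_cancel' hij] at h
  omega

/-- Two distinct edges `e`, `f` of a geodesic, in this order along it, look like
`a - a' ⋯ b' - b`, and then `a, b` are two steps further apart than `a', b'`. -/
lemma exists_dist_eq_dist_add_two {u v : V} {p : G.Walk u v} (hp : p.length = G.dist u v)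
    {e f : Sym2 V} (he : e ∈ p.edges) (hf : f ∈ p.edges) (hef : e ≠ f) :
    ∃ a ∈ e, ∃ a' ∈ e, ∃ b ∈ f, ∃ b' ∈ f, G.dist a b = G.dist a' b' + 2 := by
  obtain ⟨i, hi, rfl⟩ := List.mem_iff_getElem.mp he
  obtain ⟨j, hj, rfl⟩ := List.mem_iff_getElem.mp hf
  have hij : i ≠ j := by rintro rfl; exact hef rfl
  rw [length_edges] at hi hj
  rw [getElem_edges, getElem_edges]
  rcases Nat.lt_or_gt_of_ne hij with hlt | hlt
  · refine ⟨_, Sym2.mem_mk_left _ _, _, Sym2.mem_mk_right _ _,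
      _, Sym2.mem_mk_right _ _, _, Sym2.mem_mk_left _ _, ?_⟩
    rw [dist_getVert_getVert_of_length_eq_dist hp (by omega) (by omega),
      dist_getVert_getVert_of_length_eq_dist hp (by omega) (by omega)]
    omega
  · refine ⟨_, Sym2.mem_mk_right _ _, _, Sym2.mem_mk_left _ _,
      _, Sym2.mem_mk_left _ _, _, Sym2.mem_mk_right _ _, ?_⟩
    rw [dist_comm, dist_comm (u := p.getVert i),
      dist_getVert_getVert_of_length_eq_dist hp (by omega) (by omega),
      dist_getVert_getVert_of_length_eq_dist hp (by omega) (by omega)]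
    omega

/-- A shorter `u`-`v` path together with one of the two arcs would close a shorter cycle. -/
lemma IsCycle.dist_eq_min_length {u v : V} {p : G.Walk u v} {q : G.Walk v u}
    (hc : (p.append q).IsCycle) (hmin : ((p.append q).length : ℕ∞) ≤ G.egirth) :
    G.dist u v = min p.length q.length := by
  refine le_antisymm (le_min (dist_le p) (by simpa [dist_comm] using dist_le q.reverse)) ?_
  by_contra! hlt
  obtain ⟨r, hr, hrlen⟩ := p.reachable.exists_path_of_dist
  have hq : ¬ q.Nil := fun hq ↦ by rw [length_eq_zero_iff.mpr hq] at hlt; omega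
  have hpr : p ≠ r := by rintro rfl; omega
  obtain ⟨_, -, -, c, hc', hclen⟩ :=
    (hc.isPath_of_append_left hq).exists_isCycle_length_le_add_of_ne hr hpr
  have := hmin.trans (egirth_le_length hc')
  rw [length_append, Nat.cast_le] at this
  omega

lemma IsCycle.dist_getVert_getVert {u : V} {w : G.Walk u u} (hw : w.IsCycle)
    (hmin : (w.length : ℕ∞) ≤ G.egirth) {i j : ℕ} (hij : i ≤ j) (hj : j ≤ w.length) :
    G.dist (w.getVert i) (w.getVert j) = min (j - i) (w.length - (j - i)) := by
  set p := (w.drop i).take (j - i)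
  set r := (w.drop i).drop (j - i)
  have hw' : (w.take i).append (p.append r) = w := by
    rw [append_take_drop_eq, append_take_drop_eq]
  have hc : (p.append (r.append (w.take i))).IsCycle := by
    rw [append_assoc]
    exact (hw' ▸ hw).append_comm
  have hp : p.length = j - i := by simp only [p, take_length, drop_length]; omega
  have hr : r.length = w.length - j := by simp only [r, drop_length]; omega
  have hlen : (p.append (r.append (w.take i))).length = w.length := by
    simp only [length_append, take_length, hp, hr]
    omega
  have h := hc.dist_eq_min_length (hlen ▸ hmin)
  rw [length_append, hp, hr, take_length, drop_getVert, Nat.add_sub_cancel' hij] at h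
  rw [h]
  omega

lemma IsCycle.antipodal_edge_notMem_edges {a : V} {w : G.Walk a a} (hw : w.IsCycle)
    (hmin : (w.length : ℕ∞) ≤ G.egirth) {t : ℕ} (ht : t + w.length / 2 < w.length)
    {u v : V} {p : G.Walk u v} (hp : p.length = G.dist u v)
    (he : s(w.getVert t, w.getVert (t + 1)) ∈ p.edges) :
    s(w.getVert (t + w.length / 2), w.getVert (t + w.length / 2 + 1)) ∉ p.edges := by
  intro hf
  have h3 := hw.three_le_length
  have hne : s(w.getVert t, w.getVert (t + 1)) ≠
      s(w.getVert (t + w.length / 2), w.getVert (t + w.length / 2 + 1)) := fun h ↦ by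
    have := hw.isTrail.injOn_getVert_edge (show t < w.length by omega) ht h
    omega
  obtain ⟨x, hx, x', hx', y, hy, y', hy', hxy⟩ := exists_dist_eq_dist_add_two hp he hf hne
  have hdist : ∀ x ∈ s(w.getVert t, w.getVert (t + 1)),
      ∀ y ∈ s(w.getVert (t + w.length / 2), w.getVert (t + w.length / 2 + 1)),
      w.length / 2 - 1 ≤ G.dist x y ∧ G.dist x y ≤ w.length / 2 := by
    intro x hx y hy
    rcases Sym2.mem_iff.mp hx with rfl | rfl <;> rcases Sym2.mem_iff.mp hy with rfl | rfl <;>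
      rw [hw.dist_getVert_getVert hmin (by omega) (by omega)] <;> omega
  have := hdist x hx y hy
  have := hdist x' hx' y' hy'
  omega

end Walk

/-- Either the new vertex is already the previous vertex of the path, or it is not on the path
at all. -/
lemma IsAcyclic.exists_isPath_edges_subset_of_adj (hG : G.IsAcyclic) {u v v' : V}
    {p : G.Walk u v} (hp : p.IsPath) (h : G.Adj v v') :
    ∃ (z : V) (q : G.Walk u z), q.IsPath ∧ s(v, v') ∈ q.edges ∧ p.edges ⊆ q.edges := by
  classical
  by_cases hv' : v' ∈ p.support
  · refine ⟨v, p, hp, ?_, List.Subset.refl _⟩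
    rw [hG.path_concat (hp.takeUntil hv') hp h.symm hv', Walk.edges_concat]
    simp [Sym2.eq_swap]
  · exact ⟨v', p.concat h, hp.concat hv' h, by simp [Walk.edges_concat],
      by simp [Walk.edges_concat]⟩

lemma IsAcyclic.injOn_of_forall_exists_isPath_nodup {α : Type*} (hG : G.IsAcyclic)
    (c : Sym2 V → α) (hc : ∀ u v : V, ∃ p : G.Walk u v, p.IsPath ∧ (p.edges.map c).Nodup) :
    Set.InjOn c G.edgeSet := by
  intro e he f hf hcef
  induction e using Sym2.ind with | _ a b =>
  induction f using Sym2.ind with | _ a' b' =>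
  obtain ⟨p, hp, -⟩ := hc b a'
  obtain ⟨z, q, hq, hqe, -⟩ := hG.exists_isPath_edges_subset_of_adj hp.reverse (G.adj_symm he)
  obtain ⟨z', r, hr, hrf, hqr⟩ := hG.exists_isPath_edges_subset_of_adj hq.reverse hf
  obtain ⟨r', hr', hnodup⟩ := hc z z'
  obtain rfl : r' = r :=
    congrArg Subtype.val ((hG.subsingleton_path z z').elim ⟨r', hr'⟩ ⟨r, hr⟩)
  have hre : s(a, b) ∈ r'.edges := hqr (by simpa [Sym2.eq_swap] using hqe)
  exact List.inj_on_of_nodup_map hnodup hre hrf hcef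

lemma exists_coloring_fin_src [Finite V] (hG : G.Connected) :
    ∃ c : Sym2 V → Fin G.src, ∀ u v : V, ∃ p : G.Walk u v,
      p.IsPath ∧ p.length = G.dist u v ∧ (p.edges.map c).Nodup := by
  obtain ⟨n, ⟨enum⟩⟩ := Finite.exists_equiv_fin (Sym2 V)
  have h : ∃ n, ∃ c : Sym2 V → Fin n, ∀ u v : V, ∃ p : G.Walk u v,
      p.IsPath ∧ p.length = G.dist u v ∧ (p.edges.map c).Nodup := by
    refine ⟨n, enum, fun u v ↦ ?_⟩
    obtain ⟨p, hp, hlen⟩ := hG.exists_path_of_dist u v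
    exact ⟨p, hp, hlen, hp.isTrail.edges_nodup.map enum.injective⟩
  exact Nat.sInf_mem h

lemma src_le_card_image [Fintype G.edgeSet] {α : Type*} [DecidableEq α] (c : Sym2 V → α)
    (hc : ∀ u v : V, ∃ p : G.Walk u v,
      p.IsPath ∧ p.length = G.dist u v ∧ (p.edges.map c).Nodup)
    (hE : G.edgeFinset.Nonempty) : G.src ≤ (G.edgeFinset.image c).card := by
  let emb := (G.edgeFinset.image c).equivFin
  have hpos := (hE.image c).card_pos
  let c' : Sym2 V → Fin (G.edgeFinset.image c).card := fun e ↦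
    if h : c e ∈ G.edgeFinset.image c then emb ⟨c e, h⟩ else ⟨0, hpos⟩
  refine Nat.sInf_le ⟨c', fun u v ↦ ?_⟩
  obtain ⟨p, hp, hlen, hnodup⟩ := hc u v
  refine ⟨p, hp, hlen, hp.isTrail.edges_nodup.map_on fun e he f hf hef ↦ ?_⟩
  have hmem : ∀ e ∈ p.edges, c e ∈ G.edgeFinset.image c := fun e he ↦
    Finset.mem_image_of_mem c (G.mem_edgeFinset.mpr (p.edges_subset_edgeSet he))
  simp only [c', dif_pos (hmem e he), dif_pos (hmem f hf)] at hef
  exact List.inj_on_of_nodup_map hnodup he hf (congrArg Subtype.val (emb.injective hef))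

lemma card_edgeFinset_le_src_of_isAcyclic [Finite V] [Fintype G.edgeSet] (hG : G.Connected)
    (hac : G.IsAcyclic) : G.edgeFinset.card ≤ G.src := by
  obtain ⟨c, hc⟩ := exists_coloring_fin_src hG
  have hinj := hac.injOn_of_forall_exists_isPath_nodup c fun u v ↦
    (hc u v).imp fun _ h ↦ ⟨h.1, h.2.2⟩
  simpa using Finset.card_le_card_of_injOn c (fun _ _ ↦ Finset.mem_coe.mpr (Finset.mem_univ _))
    (by simpa using hinj)

lemma src_add_card_le_of_pairs [Finite V] [Fintype G.edgeSet] {ι : Type*} [Fintype ι]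
    [Nonempty ι] (hG : G.Connected) (e f : ι → Sym2 V)
    (hinj : Function.Injective (Sum.elim e f))
    (hmem : ∀ x, Sum.elim e f x ∈ G.edgeSet)
    (hgeo : ∀ i {u v : V} (p : G.Walk u v), p.length = G.dist u v → e i ∈ p.edges →
      f i ∉ p.edges) :
    G.src + Fintype.card ι ≤ G.edgeFinset.card := by
  classical
  have hrainbow : ∀ u v : V, ∃ p : G.Walk u v, p.IsPath ∧ p.length = G.dist u v ∧
      (p.edges.map (Function.extend f e id)).Nodup := fun u v ↦ by
    obtain ⟨p, hp, hlen⟩ := hG.exists_path_of_dist u v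
    exact ⟨p, hp, hlen, hp.isTrail.edges_nodup.map_on fun x hx y hy ↦
      Function.injOn_extend_id (S := {x | x ∈ p.edges}) hinj (hgeo · p hlen) hx hy⟩
  have hsrc := src_le_card_image _ hrainbow
    ⟨f (Classical.arbitrary ι), G.mem_edgeFinset.mpr (hmem (Sum.inr _))⟩
  have hcard :=
    Finset.card_image_extend_id_add_card_le hinj fun x ↦ G.mem_edgeFinset.mpr (hmem x)
  omega

lemma src_add_three_le_of_isCycle [Finite V] [Fintype G.edgeSet] (hG : G.Connected) {a : V}
    {w : G.Walk a a} (hw : w.IsCycle) (hmin : (w.length : ℕ∞) ≤ G.egirth)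
    (h6 : 6 ≤ w.length) : G.src + 3 ≤ G.edgeFinset.card := by
  have hinj := hw.isTrail.injOn_getVert_edge
  have h := src_add_card_le_of_pairs (ι := Fin 3) hG
    (fun i ↦ s(w.getVert i, w.getVert (i + 1)))
    (fun i ↦ s(w.getVert (i + w.length / 2), w.getVert (i + w.length / 2 + 1)))
    ?_ ?_ fun i _ _ p hp he ↦ hw.antipodal_edge_notMem_edges hmin (by omega) hp he
  · simpa using h
  · rintro (i | i) (j | j) hij <;>
      have := hinj (show _ < w.length by omega) (show _ < w.length by omega) hij <;>
      simp only [Sum.inl.injEq, Sum.inr.injEq, reduceCtorEq, Fin.ext_iff] <;> omega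
  · rintro (i | i) <;> exact G.mem_edgeSet.mpr (w.adj_getVert_succ (by omega))

end SimpleGraph

/-- If `src G ∈ {m-1, m-2}` then `3 ≤ girth G ≤ 5`. -/
theorem stmt_9 {V : Type*} [Fintype V] [DecidableEq V] (G : SimpleGraph V)
    [DecidableRel G.Adj] (hG : G.Connected)
    (h : G.src + 1 = G.edgeFinset.card ∨ G.src + 2 = G.edgeFinset.card) :
    3 ≤ G.girth ∧ G.girth ≤ 5 := by
  have hcyc : ¬ G.IsAcyclic := fun hac ↦ by
    have := card_edgeFinset_le_src_of_isAcyclic hG hac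
    omega
  refine ⟨three_le_girth hcyc, ?_⟩
  by_contra! h6
  obtain ⟨a, w, hw, hgw⟩ := exists_egirth_eq_length.mpr hcyc
  have hgirth : G.girth = w.length := by simp [girth, hgw]
  have := src_add_three_le_of_isCycle hG hw hgw.ge (by omega)
  omega
end

section
/- Let G be a unicyclic graph whose unique cycle C is a 4-cycle v1v2v3v4, and let Ti be the tree containing vi in G − E(C). If the trees T1 and T3 are nontrivial paths rooted at v1 and v3 respectively and T2, T4 are trivial, then src(G) = m − 2 = diam(G), where m is the number of edges of G. -/
open SimpleGraph

/-!
Gluing `T1` (reversed), `v2` and `T3` gives a path `x 0, …, x L` through all vertices but `v4`,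
which is joined to `x p = v1` and `x (p + 2) = v3`; so `G` has `L + 2` vertices, hence `L + 2`
edges. (The two pendant paths lie in different components of `G - E(C)`, since otherwise `G`
would have more edges than vertices.) Putting `v4` at height `p + 1`, the height changes by exactly
one along every edge, so `dist (x 0) (x L) = L` and `L ≤ diam G ≤ src G`. Conversely, colour the
spine edges `0, …, L - 1` in order and the ear edges `p + 1`, `p` crosswise: both the spine and
the detour through `v4` are then rainbow geodesics, every pair of vertices except
`{v4, x (p + 1)}` lies on one of them, and `v4, x p, x (p + 1)` serves that last pair. Hence
`src G ≤ L`.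
-/

namespace SimpleGraph

variable {V : Type*} {G : SimpleGraph V}

def HasRainbowGeodesic (G : SimpleGraph V) (c : Sym2 V → ℕ) (u v : V) : Prop :=
  ∃ p : G.Walk u v, p.IsPath ∧ p.length = G.dist u v ∧ (p.edges.map c).Nodup

theorem isStrongRainbowColoring_iff {c : Sym2 V → ℕ} :
    G.IsStrongRainbowColoring c ↔ ∀ u v, G.HasRainbowGeodesic c u v :=
  Iff.rfl

theorem HasRainbowGeodesic.of_walk {c : Sym2 V → ℕ} {u v : V} (p : G.Walk u v)
    (hlen : p.length = G.dist u v) (hc : (p.edges.map c).Nodup) :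
    G.HasRainbowGeodesic c u v :=
  ⟨p, p.isPath_of_length_eq_dist hlen, hlen, hc⟩

theorem HasRainbowGeodesic.symm {c : Sym2 V → ℕ} {u v : V} (h : G.HasRainbowGeodesic c u v) :
    G.HasRainbowGeodesic c v u := by
  obtain ⟨p, hp, hlen, hc⟩ := h
  refine ⟨p.reverse, hp.reverse, by rw [Walk.length_reverse, hlen, dist_comm], ?_⟩
  rwa [Walk.edges_reverse, List.map_reverse, List.nodup_reverse]

theorem dist_le_src [Finite V] (hG : G.Connected) (u v : V) : G.dist u v ≤ G.src := by
  obtain ⟨m, ⟨e⟩⟩ := Finite.exists_equiv_fin (Sym2 V)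
  refine le_csInf ⟨m, e, fun a b => ?_⟩ ?_
  · obtain ⟨p, hp, hlen⟩ := hG.exists_path_of_dist a b
    exact ⟨p, hp, hlen, hp.isTrail.edges_nodup.map e.injective⟩
  · rintro n ⟨c, hc⟩
    obtain ⟨p, -, hlen, hnd⟩ := hc u v
    simpa [hlen] using hnd.length_le_card

theorem diam_le_src [Finite V] (hG : G.Connected) : G.diam ≤ G.src := by
  have := hG.nonempty
  obtain ⟨u, v, h⟩ := G.exists_dist_eq_diam
  exact h ▸ dist_le_src hG u v

theorem src_le_of_isStrongRainbowColoring {n : ℕ} [NeZero n] {c : Sym2 V → ℕ}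
    (hc : G.IsStrongRainbowColoring c) (hlt : ∀ e ∈ G.edgeSet, c e < n) : G.src ≤ n := by
  refine Nat.sInf_le ⟨fun e => Fin.ofNat n (c e), fun u v => ?_⟩
  obtain ⟨p, hp, hlen, hnd⟩ := hc u v
  refine ⟨p, hp, hlen, ?_⟩
  rw [← Function.comp_def, ← List.map_map]
  refine hnd.map_on fun a ha b hb hab => ?_
  obtain ⟨e, he, rfl⟩ := List.mem_map.mp ha
  obtain ⟨f, hf, rfl⟩ := List.mem_map.mp hb
  have hlt_e := hlt e (p.edges_subset_edgeSet he)
  have hlt_f := hlt f (p.edges_subset_edgeSet hf)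
  simpa [Fin.ext_iff, Nat.mod_eq_of_lt hlt_e, Nat.mod_eq_of_lt hlt_f] using hab

theorem exists_walk_edges_eq_map_range (y : ℕ → V) :
    ∀ n, (∀ k < n, G.Adj (y k) (y (k + 1))) →
      ∃ p : G.Walk (y 0) (y n), p.edges = (List.range n).map fun k => s(y k, y (k + 1))
  | 0, _ => ⟨Walk.nil, rfl⟩
  | n + 1, hadj => by
    obtain ⟨p, hp⟩ := exists_walk_edges_eq_map_range y n fun k hk => hadj k (by omega)
    refine ⟨p.concat (hadj n (by omega)), ?_⟩
    rw [Walk.edges_concat, hp, List.range_succ, List.map_append, List.concat_eq_append]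
    rfl

section Grading

variable {φ : V → ℕ} (hφ : ∀ a b, G.Adj a b → φ b ≤ φ a + 1)
include hφ

theorem Walk.le_add_length_of_adj_le_succ {u v : V} (p : G.Walk u v) :
    φ v ≤ φ u + p.length := by
  induction p with
  | nil => simp
  | cons h p ih => have := hφ _ _ h; rw [Walk.length_cons]; omega

theorem Reachable.le_add_dist_of_adj_le_succ {u v : V} (h : G.Reachable u v) :
    φ v ≤ φ u + G.dist u v := by
  obtain ⟨p, hp⟩ := h.exists_walk_length_eq_dist
  exact hp ▸ p.le_add_length_of_adj_le_succ hφ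

theorem hasRainbowGeodesic_of_graded {c : Sym2 V → ℕ} (y : ℕ → V) (n : ℕ)
    (hadj : ∀ k < n, G.Adj (y k) (y (k + 1)))
    (hgrade : φ (y 0) + n ≤ φ (y n))
    (hc : Set.InjOn (fun k => c s(y k, y (k + 1))) (Set.Iio n)) :
    G.HasRainbowGeodesic c (y 0) (y n) := by
  obtain ⟨p, hp⟩ := exists_walk_edges_eq_map_range y n hadj
  have hlen : p.length = n := by rw [← Walk.length_edges, hp, List.length_map, List.length_range]
  refine .of_walk p (le_antisymm ?_ (dist_le p)) ?_
  · have := p.reachable.le_add_dist_of_adj_le_succ hφ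
    omega
  · rw [hp, List.map_map]
    exact (List.nodup_range).map_on fun a ha b hb => hc (by simpa using ha) (by simpa using hb)

theorem hasRainbowGeodesic_of_spine {c : Sym2 V → ℕ} (z : ℕ → V) (L : ℕ)
    (hgrade : ∀ k ≤ L, φ (z k) = k) (hadj : ∀ k < L, G.Adj (z k) (z (k + 1)))
    (hc : Set.InjOn (fun k => c s(z k, z (k + 1))) (Set.Iio L)) {i j : ℕ} (hi : i ≤ L)
    (hj : j ≤ L) : G.HasRainbowGeodesic c (z i) (z j) := by
  wlog hij : i ≤ j generalizing i j
  · exact (this hj hi (by omega)).symm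
  obtain ⟨n, rfl⟩ := Nat.exists_eq_add_of_le hij
  refine hasRainbowGeodesic_of_graded hφ (fun k => z (i + k)) n
    (fun k hk => hadj _ (by omega)) (by simp [hgrade i hi, hgrade _ hj]) ?_
  intro a ha b hb hab
  have := hc (by simp at ha ⊢; omega) (by simp at hb ⊢; omega) hab
  omega

end Grading

/-- `G` is the path `x 0, …, x L` together with a vertex `w` joined to `x p` and `x (p + 2)`,
and `φ` is the height along this path, with `w` at height `p + 1`. -/
structure IsEaredPath (G : SimpleGraph V) (x : ℕ → V) (w : V) (φ : V → ℕ) (L p : ℕ) :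
    Prop where
  add_two_le : p + 2 ≤ L
  adj_step : ∀ a b, G.Adj a b → φ a + 1 = φ b ∨ φ b + 1 = φ a
  grade_spine : ∀ i ≤ L, φ (x i) = i
  adj_spine : ∀ i < L, G.Adj (x i) (x (i + 1))
  grade_ear : φ w = p + 1
  ear_ne : w ≠ x (p + 1)
  adj_ear_left : G.Adj w (x p)
  adj_ear_right : G.Adj w (x (p + 2))
  eq_or_mem_spine : ∀ v, v = w ∨ ∃ i ≤ L, x i = v

/-- Spine edge `x k x (k + 1)` gets colour `k`; the ear edges get the colours `p + 1` and `p`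
crosswise, so that the detour `x 0, …, x p, w, x (p + 2), …, x L` is rainbow as well. -/
def earColoring [DecidableEq V] (x : ℕ → V) (w : V) (φ : V → ℕ) (p : ℕ) (e : Sym2 V) :
    ℕ :=
  if e = s(w, x p) then p + 1 else if e = s(w, x (p + 2)) then p else (e.map φ).inf

theorem earColoring_ear_left [DecidableEq V] (x : ℕ → V) (w : V) (φ : V → ℕ) (p : ℕ) :
    earColoring x w φ p s(w, x p) = p + 1 := by
  simp [earColoring]

namespace IsEaredPath

variable {x : ℕ → V} {w : V} {φ : V → ℕ} {L p : ℕ} (h : G.IsEaredPath x w φ L p)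
include h

theorem adj_le_succ (a b : V) (hab : G.Adj a b) : φ b ≤ φ a + 1 := by
  have := h.adj_step a b hab
  omega

theorem grade_le (v : V) : φ v ≤ L := by
  have := h.add_two_le
  rcases h.eq_or_mem_spine v with rfl | ⟨i, hi, rfl⟩
  · rw [h.grade_ear]; omega
  · rw [h.grade_spine i hi]; exact hi

theorem spine_ne_ear {i : ℕ} (hi : i ≤ L) : x i ≠ w := by
  rintro rfl
  have hi' := h.grade_ear
  rw [h.grade_spine i hi] at hi'
  exact h.ear_ne (hi' ▸ rfl)

theorem card_eq [Fintype V] : Fintype.card V = L + 2 := by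
  classical
  have huniv : Finset.univ = insert w ((Finset.range (L + 1)).image x) := by
    ext v
    rcases h.eq_or_mem_spine v with rfl | ⟨i, hi, rfl⟩
    · simp
    · simpa using .inr ⟨i, by omega, rfl⟩
  rw [← Finset.card_univ, huniv, Finset.card_insert_of_notMem, Finset.card_image_of_injOn,
    Finset.card_range]
  · intro i hi j hj hij
    simpa [h.grade_spine i (by simpa [Nat.lt_succ_iff] using hi),
      h.grade_spine j (by simpa [Nat.lt_succ_iff] using hj)] using congrArg φ hij
  · simp only [Finset.mem_image, Finset.mem_range, not_exists, not_and]
    exact fun i hi => h.spine_ne_ear (by omega)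

theorem le_dist_spine_ends (hG : G.Connected) : L ≤ G.dist (x 0) (x L) := by
  have := (hG.preconnected (x 0) (x L)).le_add_dist_of_adj_le_succ h.adj_le_succ
  rwa [h.grade_spine 0 (by omega), h.grade_spine L le_rfl, zero_add] at this

section Coloring

variable [DecidableEq V]

theorem earColoring_spine {k : ℕ} (hk : k < L) :
    earColoring x w φ p s(x k, x (k + 1)) = k := by
  have h₁ := h.spine_ne_ear (i := k) (by omega)
  have h₂ := h.spine_ne_ear (i := k + 1) (by omega)
  simp [earColoring, h₁, h₂, h.grade_spine k (by omega),
    h.grade_spine (k + 1) (by omega)]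

theorem earColoring_ear_right : earColoring x w φ p s(w, x (p + 2)) = p := by
  have := h.add_two_le
  have hne : x (p + 2) ≠ x p := fun heq => by
    have := congrArg φ heq
    rw [h.grade_spine _ (by omega), h.grade_spine _ (by omega)] at this
    omega
  simp [earColoring, hne, (h.spine_ne_ear (i := p) (by omega)).symm]

theorem earColoring_lt {e : Sym2 V} (he : e ∈ G.edgeSet) : earColoring x w φ p e < L := by
  have := h.add_two_le
  induction e using Sym2.ind with
  | _ a b =>
    unfold earColoring
    split_ifs
    · omega
    · omega
    · have := h.adj_step a b he
      have := h.grade_le a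
      have := h.grade_le b
      simp only [Sym2.map_mk, Sym2.inf_mk]
      omega

theorem earColoring_detour {k : ℕ} (hk : k < L) :
    earColoring x w φ p s(Function.update x (p + 1) w k, Function.update x (p + 1) w (k + 1))
      = Equiv.swap p (p + 1) k := by
  rcases Nat.lt_trichotomy k p with hkp | rfl | hkp
  · rw [Function.update_of_ne (by omega), Function.update_of_ne (by omega),
      h.earColoring_spine hk, Equiv.swap_apply_of_ne_of_ne (by omega) (by omega)]
  · rw [Function.update_of_ne (by omega), Function.update_self, Sym2.eq_swap,
      earColoring_ear_left, Equiv.swap_apply_left]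
  rcases (show k = p + 1 ∨ p + 1 < k by omega) with rfl | hkp'
  · rw [Function.update_self, Function.update_of_ne (by omega), h.earColoring_ear_right,
      Equiv.swap_apply_right]
  · rw [Function.update_of_ne (by omega), Function.update_of_ne (by omega),
      h.earColoring_spine hk, Equiv.swap_apply_of_ne_of_ne (by omega) (by omega)]

theorem hasRainbowGeodesic_spine {i j : ℕ} (hi : i ≤ L) (hj : j ≤ L) :
    G.HasRainbowGeodesic (earColoring x w φ p) (x i) (x j) := by
  refine hasRainbowGeodesic_of_spine h.adj_le_succ x L h.grade_spine h.adj_spine ?_ hi hj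
  intro a ha b hb hab
  simpa only [h.earColoring_spine ha, h.earColoring_spine hb] using hab

theorem hasRainbowGeodesic_ear_spine {j : ℕ} (hj : j ≤ L) (hjp : j ≠ p + 1) :
    G.HasRainbowGeodesic (earColoring x w φ p) w (x j) := by
  have := h.add_two_le
  have hgrade (k : ℕ) (hk : k ≤ L) : φ (Function.update x (p + 1) w k) = k := by
    rcases eq_or_ne k (p + 1) with rfl | hk'
    · rw [Function.update_self, h.grade_ear]
    · rw [Function.update_of_ne hk', h.grade_spine k hk]
  have hadj (k : ℕ) (hk : k < L) :
      G.Adj (Function.update x (p + 1) w k) (Function.update x (p + 1) w (k + 1)) := by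
    rcases eq_or_ne k p with rfl | hkp
    · rw [Function.update_of_ne (by omega), Function.update_self]
      exact h.adj_ear_left.symm
    rcases eq_or_ne k (p + 1) with rfl | hkp'
    · rw [Function.update_self, Function.update_of_ne (by omega)]
      exact h.adj_ear_right
    · rw [Function.update_of_ne hkp', Function.update_of_ne (by omega)]
      exact h.adj_spine k hk
  have hgeo := hasRainbowGeodesic_of_spine h.adj_le_succ (c := earColoring x w φ p) _ L hgrade
    hadj (fun a ha b hb hab => by
      simpa only [h.earColoring_detour ha, h.earColoring_detour hb, Equiv.apply_eq_iff_eq]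
        using hab) (i := p + 1) (j := j) (by omega) hj
  rwa [Function.update_self, Function.update_of_ne hjp] at hgeo

theorem hasRainbowGeodesic_ear_opposite :
    G.HasRainbowGeodesic (earColoring x w φ p) w (x (p + 1)) := by
  have := h.add_two_le
  let q : G.Walk w (x (p + 1)) := .cons h.adj_ear_left (.cons (h.adj_spine p (by omega)) .nil)
  have hdist : G.dist w (x (p + 1)) = 2 := by
    have hle : G.dist w (x (p + 1)) ≤ 2 := dist_le q
    have hpos := q.reachable.pos_dist_of_ne h.ear_ne
    have hne : G.dist w (x (p + 1)) ≠ 1 := fun h1 => by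
      have := h.adj_step _ _ (dist_eq_one_iff_adj.mp h1)
      rw [h.grade_ear, h.grade_spine _ (by omega)] at this
      omega
    omega
  refine .of_walk q (by rw [hdist]; rfl) ?_
  simp [q, earColoring_ear_left, h.earColoring_spine (k := p) (by omega)]

theorem isStrongRainbowColoring : G.IsStrongRainbowColoring (earColoring x w φ p) := by
  have hear (j : ℕ) (hj : j ≤ L) : G.HasRainbowGeodesic (earColoring x w φ p) w (x j) := by
    rcases eq_or_ne j (p + 1) with rfl | hjp
    · exact h.hasRainbowGeodesic_ear_opposite
    · exact h.hasRainbowGeodesic_ear_spine hj hjp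
  refine isStrongRainbowColoring_iff.mpr fun u v => ?_
  rcases h.eq_or_mem_spine u with rfl | ⟨i, hi, rfl⟩ <;>
    rcases h.eq_or_mem_spine v with rfl | ⟨j, hj, rfl⟩
  · exact .of_walk .nil (by simp) (by simp)
  · exact hear j hj
  · exact (hear i hi).symm
  · exact h.hasRainbowGeodesic_spine hi hj

end Coloring

theorem src_le : G.src ≤ L := by
  classical
  have : NeZero L := ⟨by have := h.add_two_le; omega⟩
  exact src_le_of_isStrongRainbowColoring h.isStrongRainbowColoring fun _ => h.earColoring_lt

theorem src_eq [Finite V] (hG : G.Connected) : G.src = L := by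
  have := h.le_dist_spine_ends hG
  have := dist_le_src hG (x 0) (x L)
  have := h.src_le
  omega

theorem diam_eq [Finite V] (hG : G.Connected) : G.diam = L := by
  have := hG.nonempty
  have := G.dist_le_diam (connected_iff_ediam_ne_top.mp hG) (u := x 0) (v := x L)
  have := h.le_dist_spine_ends hG
  have := diam_le_src hG
  have := h.src_le
  omega

end IsEaredPath

theorem exists_maximal_path [Fintype V] (H : SimpleGraph V) (r : V) :
    ∃ (a : ℕ) (u : ℕ → V), u 0 = r ∧ Set.InjOn u (Set.Iic a) ∧
      (∀ i < a, H.Adj (u i) (u (i + 1))) ∧ ∀ y, H.Adj (u a) y → ∃ i ≤ a, u i = y := by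
  classical
  let P (k : ℕ) : Prop :=
    ∃ u : ℕ → V, u 0 = r ∧ Set.InjOn u (Set.Iic k) ∧ ∀ i < k, H.Adj (u i) (u (i + 1))
  have hbound {k : ℕ} (hk : P k) : k < Fintype.card V := by
    obtain ⟨u, -, hinj, -⟩ := hk
    have := Finset.card_le_card_of_injOn u (fun _ _ => Finset.mem_univ _)
      (s := Finset.Iic k) (by simpa using hinj)
    simp only [Nat.card_Iic, Finset.card_univ] at this
    omega
  have hP0 : P 0 := ⟨fun _ => r, rfl, fun i hi j hj _ => by simp_all, by simp⟩
  set a := Nat.findGreatest P (Fintype.card V)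
  obtain ⟨u, hu0, hinj, hadj⟩ : P a := Nat.findGreatest_spec (Nat.zero_le _) hP0
  refine ⟨a, u, hu0, hinj, hadj, fun y hy => ?_⟩
  by_contra! hnew
  have hext : P (a + 1) := by
    refine ⟨Function.update u (a + 1) y, by simp [hu0], ?_, fun i hi => ?_⟩
    · intro i hi j hj hij
      simp only [Set.mem_Iic] at hi hj
      rcases eq_or_ne i (a + 1) with rfl | hi' <;> rcases eq_or_ne j (a + 1) with rfl | hj'
      · rfl
      · simp only [Function.update_self, Function.update_of_ne hj'] at hij
        exact absurd hij.symm (hnew j (by omega))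
      · simp only [Function.update_self, Function.update_of_ne hi'] at hij
        exact absurd hij (hnew i (by omega))
      · simp only [Function.update_of_ne hi', Function.update_of_ne hj'] at hij
        exact hinj (by simp; omega) (by simp; omega) hij
    · rw [Function.update_of_ne (by omega)]
      rcases (show i < a ∨ i = a by omega) with hi' | rfl
      · rw [Function.update_of_ne (by omega)]
        exact hadj i hi'
      · rwa [Function.update_self]
  exact Nat.findGreatest_is_greatest (Nat.lt_succ_self a) (hbound hext).le hext

theorem exists_index_of_adj_of_degree_le [Finite V] {H : SimpleGraph V} {u : ℕ → V} {a : ℕ}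
    (hinj : Set.InjOn u (Set.Iic a)) (hadj : ∀ i < a, H.Adj (u i) (u (i + 1)))
    (hend : ∀ y, H.Adj (u a) y → ∃ i ≤ a, u i = y)
    (h0 : (H.neighborSet (u 0)).ncard ≤ 1) (hdeg : ∀ i ≤ a, (H.neighborSet (u i)).ncard ≤ 2)
    {i : ℕ} (hi : i ≤ a) {y : V} (hy : H.Adj (u i) y) :
    ∃ j ≤ a, u j = y ∧ (i + 1 = j ∨ j + 1 = i) := by
  have hinner {i : ℕ} (hi : i < a) {y : V} (hy : H.Adj (u i) y) :
      y = u (i + 1) ∨ (0 < i ∧ y = u (i - 1)) := by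
    rcases Nat.eq_zero_or_pos i with rfl | hpos
    · exact .inl ((Set.ncard_le_one_iff).mp h0 hy (hadj 0 hi))
    by_contra! hne
    have hprev : H.Adj (u i) (u (i - 1)) := by
      have := hadj (i - 1) (by omega)
      rwa [Nat.sub_add_cancel hpos, adj_comm] at this
    have hsucc_ne : u (i + 1) ≠ u (i - 1) := fun heq => by
      have := hinj (by simp; omega) (by simp; omega) heq
      omega
    have := (Set.two_lt_ncard_iff (s := H.neighborSet (u i))).mpr
      ⟨y, _, _, hy, hadj i hi, hprev, hne.1, hne.2 hpos, hsucc_ne⟩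
    have := hdeg i hi.le
    omega
  rcases Nat.lt_or_ge i a with hia | hia
  · rcases hinner hia hy with rfl | ⟨hpos, rfl⟩
    · exact ⟨i + 1, hia, rfl, .inl rfl⟩
    · exact ⟨i - 1, by omega, rfl, .inr (by omega)⟩
  obtain rfl : a = i := le_antisymm hia hi
  obtain ⟨j, hj, rfl⟩ := hend y hy
  have hja : j < a := lt_of_le_of_ne hj fun h => hy.ne (h ▸ rfl)
  refine ⟨j, hj, rfl, .inr ?_⟩
  rcases hinner hja hy.symm with heq | ⟨-, heq⟩ <;>
    have := hinj (by simp) (by simp; omega) heq <;> omega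

/-- The component of `r` in `H` is the path `u 0 = r, …, u a`, and `f` gives the position of a
vertex along it. -/
structure IsPathComponent (H : SimpleGraph V) (r : V) (u : ℕ → V) (f : V → ℕ) (a : ℕ) :
    Prop where
  start : u 0 = r
  position : ∀ i ≤ a, f (u i) = i
  adj : ∀ i < a, H.Adj (u i) (u (i + 1))
  eq_of_reachable : ∀ v, H.Reachable r v → f v ≤ a ∧ u (f v) = v
  adj_step : ∀ y z, H.Reachable r y → H.Adj y z → f y + 1 = f z ∨ f z + 1 = f y

theorem IsPathComponent.reachable {H : SimpleGraph V} {r : V} {u : ℕ → V} {f : V → ℕ}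
    {a : ℕ} (h : H.IsPathComponent r u f a) : ∀ i ≤ a, H.Reachable r (u i)
  | 0, _ => h.start ▸ .rfl
  | i + 1, hi => (h.reachable i (by omega)).trans (h.adj i hi).reachable

theorem exists_isPathComponent [Fintype V] (H : SimpleGraph V) (r : V)
    (hr : (H.neighborSet r).ncard ≤ 1)
    (hdeg : ∀ v, H.Reachable r v → (H.neighborSet v).ncard ≤ 2) :
    ∃ u f a, H.IsPathComponent r u f a := by
  obtain ⟨a, u, rfl, hinj, hadj, hend⟩ := exists_maximal_path H r
  have hreach (i : ℕ) (hi : i ≤ a) : H.Reachable (u 0) (u i) := by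
    induction i with
    | zero => rfl
    | succ i ih => exact (ih (by omega)).trans (hadj i hi).reachable
  have hnbr {i : ℕ} (hi : i ≤ a) {y : V} (hy : H.Adj (u i) y) :=
    exists_index_of_adj_of_degree_le hinj hadj hend hr
      (fun j hj => hdeg _ (hreach j hj)) hi hy
  have hmem {v : V} (hv : H.Reachable (u 0) v) : ∃ i ≤ a, u i = v := by
    obtain ⟨q⟩ := hv.symm
    suffices ∀ {w w'} (q : H.Walk w w'), (∃ i ≤ a, u i = w') → ∃ i ≤ a, u i = w from
      this q ⟨0, Nat.zero_le _, rfl⟩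
    intro w w' q
    induction q with
    | nil => exact id
    | cons hzy _ ih =>
      intro hw'
      obtain ⟨i, hi, hi'⟩ := ih hw'
      obtain ⟨j, hj, rfl, -⟩ := hnbr hi (hi' ▸ hzy.symm)
      exact ⟨j, hj, rfl⟩
  have hpos : ∀ i ≤ a, Function.invFunOn u (Set.Iic a) (u i) = i := fun i hi =>
    hinj.leftInvOn_invFunOn (Set.mem_Iic.mpr hi)
  refine ⟨u, Function.invFunOn u (Set.Iic a), a, rfl, hpos, hadj, fun v hv => ?_,
    fun y z hy hyz => ?_⟩
  · obtain ⟨i, hi, rfl⟩ := hmem hv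
    simp [hpos i hi, hi]
  · obtain ⟨i, hi, rfl⟩ := hmem hy
    obtain ⟨j, hj, rfl, hij⟩ := hnbr hi hyz
    rwa [hpos i hi, hpos j hj]

theorem exists_mem_reachable_deleteEdges (hG : G.Connected) {s : Set (Sym2 V)} {e : Sym2 V}
    (he : e ∈ s) (z : V) : ∃ e ∈ s, ∃ y ∈ e, (G.deleteEdges s).Reachable y z := by
  obtain ⟨v, hv⟩ : ∃ v, v ∈ e := ⟨e.out.1, Sym2.out_fst_mem e⟩
  obtain ⟨q⟩ := hG.preconnected z v
  induction q with
  | nil => exact ⟨e, he, _, hv, .rfl⟩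
  | @cons z z' _ hzz' _ ih =>
    by_cases hs : s(z, z') ∈ s
    · exact ⟨_, hs, z, Sym2.mem_mk_left _ _, .rfl⟩
    · obtain ⟨e', he', y, hy, hreach⟩ := ih hv
      refine ⟨e', he', y, hy, hreach.trans (deleteEdges_adj.mpr ⟨hzz'.symm, ?_⟩).reachable⟩
      rwa [Sym2.eq_swap]

theorem IsPathComponent.add_card_le_card_edgeFinset [Fintype V] [DecidableRel G.Adj] {s : Set (Sym2 V)} {Q : Finset (Sym2 V)}
    (hQ : ∀ e ∈ Q, e ∈ G.edgeSet) (hQs : ↑Q = s) {r : V} {u : ℕ → V} {f : V → ℕ} {a : ℕ}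
    (h : (G.deleteEdges s).IsPathComponent r u f a) : a + Q.card ≤ G.edgeFinset.card := by
  classical
  subst hQs
  let P := (Finset.range a).image fun i => s(u i, u (i + 1))
  have hP : P.card = a := by
    refine (Finset.card_image_of_injOn fun i hi j hj hij => ?_).trans (Finset.card_range a)
    simp only [Finset.coe_range, Set.mem_Iio] at hi hj
    have hf (k : ℕ) (hk : k ≤ a) := h.position k hk
    rcases Sym2.eq_iff.mp hij with ⟨h₁, -⟩ | ⟨h₁, h₂⟩
    · simpa [hf i (by omega), hf j (by omega)] using congrArg f h₁
    · have := congrArg f h₁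
      have := congrArg f h₂
      simp only [hf _ (show i ≤ a by omega), hf _ (show j + 1 ≤ a by omega),
        hf _ (show i + 1 ≤ a by omega), hf _ (show j ≤ a by omega)] at *
      omega
  have hdisj : Disjoint P Q := by
    refine Finset.disjoint_left.mpr fun e he heQ => ?_
    obtain ⟨i, hi, rfl⟩ := Finset.mem_image.mp he
    exact (deleteEdges_adj.mp (h.adj i (Finset.mem_range.mp hi))).2 heQ
  have hsub : P ∪ Q ⊆ G.edgeFinset := by
    intro e he
    rcases Finset.mem_union.mp he with he | he
    · obtain ⟨i, hi, rfl⟩ := Finset.mem_image.mp he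
      exact mem_edgeFinset.mpr (deleteEdges_le _ (h.adj i (Finset.mem_range.mp hi)))
    · exact mem_edgeFinset.mpr (hQ e he)
  calc a + Q.card = (P ∪ Q).card := by rw [Finset.card_union_of_disjoint hdisj, hP]
    _ ≤ _ := Finset.card_le_card hsub

def squareEdges (v1 v2 v3 v4 : V) : Set (Sym2 V) := {s(v1, v2), s(v2, v3), s(v3, v4), s(v4, v1)}

theorem reachable_deleteEdges_squareEdges (hG : G.Connected) (v1 v2 v3 v4 z : V) :
    (G.deleteEdges (squareEdges v1 v2 v3 v4)).Reachable v1 z ∨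
      (G.deleteEdges (squareEdges v1 v2 v3 v4)).Reachable v2 z ∨
      (G.deleteEdges (squareEdges v1 v2 v3 v4)).Reachable v3 z ∨
      (G.deleteEdges (squareEdges v1 v2 v3 v4)).Reachable v4 z := by
  obtain ⟨e, he, y, hy, hr⟩ :=
    exists_mem_reachable_deleteEdges hG (s := squareEdges v1 v2 v3 v4) (Set.mem_insert _ _) z
  simp only [squareEdges, Set.mem_insert_iff, Set.mem_singleton_iff] at he
  rcases he with rfl | rfl | rfl | rfl <;> rcases Sym2.mem_iff.mp hy with rfl | rfl <;> tauto

theorem not_reachable_deleteEdges_squareEdges [Fintype V] [DecidableRel G.Adj]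
    (hG : G.Connected) {v1 v2 v3 v4 : V}
    (h12 : G.Adj v1 v2) (h23 : G.Adj v2 v3) (h34 : G.Adj v3 v4) (h41 : G.Adj v4 v1)
    (h13 : v1 ≠ v3) (h24 : v2 ≠ v4) (huni : G.edgeFinset.card = Fintype.card V)
    (hT2 : ∀ w, (G.deleteEdges (squareEdges v1 v2 v3 v4)).Reachable v2 w → w = v2)
    (hT4 : ∀ w, (G.deleteEdges (squareEdges v1 v2 v3 v4)).Reachable v4 w → w = v4)
    {u : ℕ → V} {f : V → ℕ} {a : ℕ}
    (hT1 : (G.deleteEdges (squareEdges v1 v2 v3 v4)).IsPathComponent v1 u f a) :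
    ¬ (G.deleteEdges (squareEdges v1 v2 v3 v4)).Reachable v1 v3 := by
  classical
  intro h13r
  have hV : Fintype.card V ≤ a + 3 := by
    have hsub : Finset.univ ⊆ insert v2 (insert v4 ((Finset.range (a + 1)).image u)) := by
      intro z _
      have hT1z (hz : (G.deleteEdges (squareEdges v1 v2 v3 v4)).Reachable v1 z) :
          z ∈ (Finset.range (a + 1)).image u := by
        obtain ⟨hle, hz⟩ := hT1.eq_of_reachable z hz
        exact Finset.mem_image.mpr ⟨f z, by simpa [Nat.lt_succ_iff] using hle, hz⟩
      rcases reachable_deleteEdges_squareEdges hG v1 v2 v3 v4 z with hz | hz | hz | hz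
      · simp [hT1z hz]
      · simp [hT2 z hz]
      · simp [hT1z (h13r.trans hz)]
      · simp [hT4 z hz]
    calc Fintype.card V = Finset.univ.card := Finset.card_univ.symm
      _ ≤ _ := Finset.card_le_card hsub
      _ ≤ ((Finset.range (a + 1)).image u).card + 2 := by
        grw [Finset.card_insert_le, Finset.card_insert_le]
      _ ≤ a + 3 := by grw [Finset.card_image_le, Finset.card_range]
  let Q : Finset (Sym2 V) := {s(v1, v2), s(v2, v3), s(v3, v4), s(v4, v1)}
  have hQ : Q.card = 4 := by
    have := h12.ne; have := h23.ne; have := h34.ne; have := h41.ne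
    rw [Finset.card_insert_of_notMem, Finset.card_insert_of_notMem,
      Finset.card_insert_of_notMem, Finset.card_singleton] <;> simp [*, Ne.symm]
  have hQG : ∀ e ∈ Q, e ∈ G.edgeSet := by
    simp only [Q, Finset.mem_insert, Finset.mem_singleton]
    rintro e (rfl | rfl | rfl | rfl) <;> assumption
  have hE := hT1.add_card_le_card_edgeFinset hQG (by simp [Q, squareEdges])
  omega

def glueSpine (u₁ : ℕ → V) (m : V) (u₂ : ℕ → V) (a i : ℕ) : V :=
  if i ≤ a then u₁ (a - i) else if i = a + 1 then m else u₂ (i - (a + 2))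

section glueSpine

variable {u₁ u₂ : ℕ → V} {m : V} {a : ℕ}

theorem glueSpine_of_le {i : ℕ} (hi : i ≤ a) : glueSpine u₁ m u₂ a i = u₁ (a - i) := by
  simp [glueSpine, hi]

theorem glueSpine_self : glueSpine u₁ m u₂ a a = u₁ 0 := by
  rw [glueSpine_of_le le_rfl, Nat.sub_self]

theorem glueSpine_succ : glueSpine u₁ m u₂ a (a + 1) = m := by
  simp [glueSpine]

theorem glueSpine_add_two (j : ℕ) : glueSpine u₁ m u₂ a (a + 2 + j) = u₂ j := by
  simp [glueSpine, show ¬ a + 2 + j ≤ a by omega, show a + 2 + j ≠ a + 1 by omega]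

end glueSpine

theorem adj_glueSpine {H : SimpleGraph V} (hHG : H ≤ G) {v1 v2 v3 : V} (h12 : G.Adj v1 v2)
    (h23 : G.Adj v2 v3) {u₁ u₃ : ℕ → V} {f₁ f₃ : V → ℕ} {a b : ℕ}
    (hT1 : H.IsPathComponent v1 u₁ f₁ a) (hT3 : H.IsPathComponent v3 u₃ f₃ b) {i : ℕ}
    (hi : i < a + b + 2) :
    G.Adj (glueSpine u₁ v2 u₃ a i) (glueSpine u₁ v2 u₃ a (i + 1)) := by
  rcases Nat.lt_or_ge i a with hia | hai
  · rw [glueSpine_of_le hia.le, glueSpine_of_le hia]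
    have := hT1.adj (a - (i + 1)) (by omega)
    rw [show a - (i + 1) + 1 = a - i by omega] at this
    exact (hHG this).symm
  rcases (show i = a ∨ i = a + 1 ∨ a + 2 ≤ i by omega) with rfl | rfl | hai
  · rwa [glueSpine_self, hT1.start, glueSpine_succ]
  · rwa [glueSpine_succ, show a + 1 + 1 = a + 2 + 0 from rfl, glueSpine_add_two, hT3.start]
  · obtain ⟨j, rfl⟩ := Nat.exists_eq_add_of_le hai
    rw [glueSpine_add_two, show a + 2 + j + 1 = a + 2 + (j + 1) by omega, glueSpine_add_two]
    exact hHG (hT3.adj j (by omega))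

theorem eq_or_mem_glueSpine (hG : G.Connected) {v1 v2 v3 v4 : V}
    (hT2 : ∀ w, (G.deleteEdges (squareEdges v1 v2 v3 v4)).Reachable v2 w → w = v2)
    (hT4 : ∀ w, (G.deleteEdges (squareEdges v1 v2 v3 v4)).Reachable v4 w → w = v4)
    {u₁ u₃ : ℕ → V} {f₁ f₃ : V → ℕ} {a b : ℕ}
    (hT1 : (G.deleteEdges (squareEdges v1 v2 v3 v4)).IsPathComponent v1 u₁ f₁ a)
    (hT3 : (G.deleteEdges (squareEdges v1 v2 v3 v4)).IsPathComponent v3 u₃ f₃ b) (v : V) :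
    v = v4 ∨ ∃ i ≤ a + b + 2, glueSpine u₁ v2 u₃ a i = v := by
  rcases reachable_deleteEdges_squareEdges hG v1 v2 v3 v4 v with hv | hv | hv | hv
  · obtain ⟨hle, hv⟩ := hT1.eq_of_reachable v hv
    refine .inr ⟨a - f₁ v, by omega, ?_⟩
    rw [glueSpine_of_le (by omega), Nat.sub_sub_self hle, hv]
  · exact .inr ⟨a + 1, by omega, by rw [glueSpine_succ, hT2 v hv]⟩
  · obtain ⟨hle, hv⟩ := hT3.eq_of_reachable v hv
    exact .inr ⟨a + 2 + f₃ v, by omega, by rw [glueSpine_add_two, hv]⟩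
  · exact .inl (hT4 v hv)

theorem adj_step_of_square (hG : G.Connected) {v1 v2 v3 v4 : V}
    (hT2 : ∀ w, (G.deleteEdges (squareEdges v1 v2 v3 v4)).Reachable v2 w → w = v2)
    (hT4 : ∀ w, (G.deleteEdges (squareEdges v1 v2 v3 v4)).Reachable v4 w → w = v4)
    {u₁ u₃ : ℕ → V} {f₁ f₃ : V → ℕ} {a b : ℕ}
    (hT1 : (G.deleteEdges (squareEdges v1 v2 v3 v4)).IsPathComponent v1 u₁ f₁ a)
    (hT3 : (G.deleteEdges (squareEdges v1 v2 v3 v4)).IsPathComponent v3 u₃ f₃ b)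
    {φ : V → ℕ}
    (hφ₁ : ∀ v, (G.deleteEdges (squareEdges v1 v2 v3 v4)).Reachable v1 v → φ v = a - f₁ v)
    (hφ₃ : ∀ v, ¬ (G.deleteEdges (squareEdges v1 v2 v3 v4)).Reachable v1 v →
      (G.deleteEdges (squareEdges v1 v2 v3 v4)).Reachable v3 v → φ v = a + 2 + f₃ v)
    (hv1 : φ v1 = a) (hv2 : φ v2 = a + 1) (hv3 : φ v3 = a + 2) (hv4 : φ v4 = a + 1)
    {y z : V} (hyz : G.Adj y z) : φ y + 1 = φ z ∨ φ z + 1 = φ y := by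
  set H := G.deleteEdges (squareEdges v1 v2 v3 v4)
  by_cases hs : s(y, z) ∈ squareEdges v1 v2 v3 v4
  · simp only [squareEdges, Set.mem_insert_iff, Set.mem_singleton_iff, Sym2.eq_iff] at hs
    rcases hs with (⟨rfl, rfl⟩ | ⟨rfl, rfl⟩) | (⟨rfl, rfl⟩ | ⟨rfl, rfl⟩) |
      (⟨rfl, rfl⟩ | ⟨rfl, rfl⟩) | (⟨rfl, rfl⟩ | ⟨rfl, rfl⟩) <;> omega
  have hH : H.Adj y z := deleteEdges_adj.mpr ⟨hyz, hs⟩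
  by_cases hy₁ : H.Reachable v1 y
  · have hz₁ := hy₁.trans hH.reachable
    have := hT1.adj_step y z hy₁ hH
    have := (hT1.eq_of_reachable y hy₁).1
    have := (hT1.eq_of_reachable z hz₁).1
    rw [hφ₁ y hy₁, hφ₁ z hz₁]
    omega
  have hz₁ : ¬ H.Reachable v1 z := fun h => hy₁ (h.trans hH.reachable.symm)
  by_cases hy₃ : H.Reachable v3 y
  · have hz₃ := hy₃.trans hH.reachable
    have := hT3.adj_step y z hy₃ hH
    rw [hφ₃ y hy₁ hy₃, hφ₃ z hz₁ hz₃]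
    omega
  exfalso
  rcases reachable_deleteEdges_squareEdges hG v1 v2 v3 v4 y with hy | hy | hy | hy
  · exact hy₁ hy
  · exact hH.ne ((hT2 y hy).trans (hT2 z (hy.trans hH.reachable)).symm)
  · exact hy₃ hy
  · exact hH.ne ((hT4 y hy).trans (hT4 z (hy.trans hH.reachable)).symm)

theorem exists_isEaredPath [Fintype V] [DecidableRel G.Adj]
    (hG : G.Connected) {v1 v2 v3 v4 : V}
    (h12 : G.Adj v1 v2) (h23 : G.Adj v2 v3) (h34 : G.Adj v3 v4) (h41 : G.Adj v4 v1)
    (h13 : v1 ≠ v3) (h24 : v2 ≠ v4) (huni : G.edgeFinset.card = Fintype.card V)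
    (hT2 : ∀ w, (G.deleteEdges (squareEdges v1 v2 v3 v4)).Reachable v2 w → w = v2)
    (hT4 : ∀ w, (G.deleteEdges (squareEdges v1 v2 v3 v4)).Reachable v4 w → w = v4)
    {u₁ u₃ : ℕ → V} {f₁ f₃ : V → ℕ} {a b : ℕ}
    (hT1 : (G.deleteEdges (squareEdges v1 v2 v3 v4)).IsPathComponent v1 u₁ f₁ a)
    (hT3 : (G.deleteEdges (squareEdges v1 v2 v3 v4)).IsPathComponent v3 u₃ f₃ b) :
    ∃ φ, G.IsEaredPath (glueSpine u₁ v2 u₃ a) v4 φ (a + b + 2) a := by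
  classical
  set H := G.deleteEdges (squareEdges v1 v2 v3 v4)
  have h13r : ¬ H.Reachable v1 v3 :=
    not_reachable_deleteEdges_squareEdges hG h12 h23 h34 h41 h13 h24 huni hT2 hT4 hT1
  have h12r : ¬ H.Reachable v1 v2 := fun h => h12.ne (hT2 v1 h.symm)
  have h32r : ¬ H.Reachable v3 v2 := fun h => h23.ne (hT2 v3 h.symm).symm
  have h14r : ¬ H.Reachable v1 v4 := fun h => h41.ne (hT4 v1 h.symm).symm
  have h34r : ¬ H.Reachable v3 v4 := fun h => h34.ne (hT4 v3 h.symm)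
  let φ (v : V) : ℕ :=
    if H.Reachable v1 v then a - f₁ v else if H.Reachable v3 v then a + 2 + f₃ v else a + 1
  have hφ₁ (v : V) (hv : H.Reachable v1 v) : φ v = a - f₁ v := if_pos hv
  have hφ₃ (v : V) (hv₁ : ¬ H.Reachable v1 v) (hv : H.Reachable v3 v) :
      φ v = a + 2 + f₃ v := by
    simp only [φ, if_neg hv₁, if_pos hv]
  have hφ {v : V} (hv₁ : ¬ H.Reachable v1 v) (hv₃ : ¬ H.Reachable v3 v) : φ v = a + 1 := by
    simp only [φ, if_neg hv₁, if_neg hv₃]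
  have hgrade (i : ℕ) (hi : i ≤ a + b + 2) : φ (glueSpine u₁ v2 u₃ a i) = i := by
    rcases (show i ≤ a ∨ i = a + 1 ∨ a + 2 ≤ i by omega) with hia | rfl | hai
    · rw [glueSpine_of_le hia, hφ₁ _ (hT1.reachable _ (by omega)), hT1.position _ (by omega)]
      omega
    · rw [glueSpine_succ, hφ h12r h32r]
    · obtain ⟨j, rfl⟩ := Nat.exists_eq_add_of_le hai
      have hj := hT3.reachable j (by omega)
      rw [glueSpine_add_two, hφ₃ _ (fun h => h13r (h.trans hj.symm)) hj,
        hT3.position j (by omega)]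
  have hv1 := hgrade a (by omega)
  have hv3 := hgrade (a + 2 + 0) (by omega)
  rw [glueSpine_self, hT1.start] at hv1
  rw [glueSpine_add_two, hT3.start] at hv3
  exact ⟨φ,
    { add_two_le := by omega
      adj_step := fun y z => adj_step_of_square hG hT2 hT4 hT1 hT3 hφ₁ hφ₃ hv1
        (hφ h12r h32r) hv3 (hφ h14r h34r)
      grade_spine := hgrade
      adj_spine := fun i hi => adj_glueSpine (deleteEdges_le _) h12 h23 hT1 hT3 hi
      grade_ear := hφ h14r h34r
      ear_ne := by rw [glueSpine_succ]; exact h24.symm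
      adj_ear_left := by rwa [glueSpine_self, hT1.start]
      adj_ear_right := by
        rwa [show a + 2 = a + 2 + 0 from rfl, glueSpine_add_two, hT3.start, adj_comm]
      eq_or_mem_spine := eq_or_mem_glueSpine hG hT2 hT4 hT1 hT3 }⟩

end SimpleGraph

theorem stmt_19_general {V : Type*} [Fintype V] (G : SimpleGraph V)
    [DecidableRel G.Adj] (hG : G.Connected) (v1 v2 v3 v4 : V)
    (h12 : G.Adj v1 v2) (h23 : G.Adj v2 v3) (h34 : G.Adj v3 v4) (h41 : G.Adj v4 v1)
    (h13 : v1 ≠ v3) (h24 : v2 ≠ v4)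
    (huni : G.edgeFinset.card = Fintype.card V)
    -- `G'` is `G` minus the edges of the 4-cycle:
    -- `T1` is a nontrivial path with endpoint `v1`:
    (hT1 : (∃ w, w ≠ v1 ∧
        (G.deleteEdges {s(v1, v2), s(v2, v3), s(v3, v4), s(v4, v1)}).Reachable v1 w) ∧
      ((G.deleteEdges {s(v1, v2), s(v2, v3), s(v3, v4), s(v4, v1)}).neighborSet v1).ncard ≤ 1 ∧
      ∀ w, (G.deleteEdges {s(v1, v2), s(v2, v3), s(v3, v4), s(v4, v1)}).Reachable v1 w →
        ((G.deleteEdges {s(v1, v2), s(v2, v3), s(v3, v4), s(v4, v1)}).neighborSet w).ncard ≤ 2)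
    -- `T3` is a nontrivial path with endpoint `v3`:
    (hT3 : (∃ w, w ≠ v3 ∧
        (G.deleteEdges {s(v1, v2), s(v2, v3), s(v3, v4), s(v4, v1)}).Reachable v3 w) ∧
      ((G.deleteEdges {s(v1, v2), s(v2, v3), s(v3, v4), s(v4, v1)}).neighborSet v3).ncard ≤ 1 ∧
      ∀ w, (G.deleteEdges {s(v1, v2), s(v2, v3), s(v3, v4), s(v4, v1)}).Reachable v3 w →
        ((G.deleteEdges {s(v1, v2), s(v2, v3), s(v3, v4), s(v4, v1)}).neighborSet w).ncard ≤ 2)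
    -- `T2` and `T4` are trivial:
    (hT2 : ∀ w, (G.deleteEdges {s(v1, v2), s(v2, v3), s(v3, v4), s(v4, v1)}).Reachable v2 w →
      w = v2)
    (hT4 : ∀ w, (G.deleteEdges {s(v1, v2), s(v2, v3), s(v3, v4), s(v4, v1)}).Reachable v4 w →
      w = v4) :
    G.src + 2 = G.edgeFinset.card ∧ G.src = G.diam := by
  obtain ⟨u₁, f₁, a, hP₁⟩ := exists_isPathComponent _ v1 hT1.2.1 hT1.2.2
  obtain ⟨u₃, f₃, b, hP₃⟩ := exists_isPathComponent _ v3 hT3.2.1 hT3.2.2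
  obtain ⟨φ, h⟩ := exists_isEaredPath hG h12 h23 h34 h41 h13 h24 huni hT2 hT4 hP₁ hP₃
  rw [h.src_eq hG, h.diam_eq hG, huni, h.card_eq]
  exact ⟨rfl, rfl⟩

/-- Unicyclic graph whose cycle is a 4-cycle `v1 v2 v3 v4`: if the pendant trees `T1, T3`
(components of `G - E(C)` at `v1`, `v3`) are nontrivial paths with endpoints `v1`, `v3`
respectively, and `T2, T4` are trivial, then `src G = m - 2 = diam G`. -/
theorem stmt_19 {V : Type*} [Fintype V] [DecidableEq V] (G : SimpleGraph V)
    [DecidableRel G.Adj] (hG : G.Connected) (v1 v2 v3 v4 : V)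
    (h12 : G.Adj v1 v2) (h23 : G.Adj v2 v3) (h34 : G.Adj v3 v4) (h41 : G.Adj v4 v1)
    (h13 : v1 ≠ v3) (h24 : v2 ≠ v4)
    (huni : G.edgeFinset.card = Fintype.card V)
    -- `G'` is `G` minus the edges of the 4-cycle:
    -- `T1` is a nontrivial path with endpoint `v1`:
    (hT1 : (∃ w, w ≠ v1 ∧
        (G.deleteEdges {s(v1, v2), s(v2, v3), s(v3, v4), s(v4, v1)}).Reachable v1 w) ∧
      ((G.deleteEdges {s(v1, v2), s(v2, v3), s(v3, v4), s(v4, v1)}).neighborSet v1).ncard ≤ 1 ∧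
      ∀ w, (G.deleteEdges {s(v1, v2), s(v2, v3), s(v3, v4), s(v4, v1)}).Reachable v1 w →
        ((G.deleteEdges {s(v1, v2), s(v2, v3), s(v3, v4), s(v4, v1)}).neighborSet w).ncard ≤ 2)
    -- `T3` is a nontrivial path with endpoint `v3`:
    (hT3 : (∃ w, w ≠ v3 ∧
        (G.deleteEdges {s(v1, v2), s(v2, v3), s(v3, v4), s(v4, v1)}).Reachable v3 w) ∧
      ((G.deleteEdges {s(v1, v2), s(v2, v3), s(v3, v4), s(v4, v1)}).neighborSet v3).ncard ≤ 1 ∧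
      ∀ w, (G.deleteEdges {s(v1, v2), s(v2, v3), s(v3, v4), s(v4, v1)}).Reachable v3 w →
        ((G.deleteEdges {s(v1, v2), s(v2, v3), s(v3, v4), s(v4, v1)}).neighborSet w).ncard ≤ 2)
    -- `T2` and `T4` are trivial:
    (hT2 : ∀ w, (G.deleteEdges {s(v1, v2), s(v2, v3), s(v3, v4), s(v4, v1)}).Reachable v2 w →
      w = v2)
    (hT4 : ∀ w, (G.deleteEdges {s(v1, v2), s(v2, v3), s(v3, v4), s(v4, v1)}).Reachable v4 w →
      w = v4) :
    G.src + 2 = G.edgeFinset.card ∧ G.src = G.diam :=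
  stmt_19_general G hG v1 v2 v3 v4 h12 h23 h34 h41 h13 h24 huni hT1 hT3 hT2 hT4
end
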